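/- Let D be a positive non-square integer with D ≡ 1 (mod 8), and write D = f²·D₀ where D₀ is the (1,2)-primitive part. For each divisor r of f define S_{D/r²} = ∑_{0 < e < √(D/r²), e odd} (-1)^((e-1)/2) · e · m_{D/r²}(e), where m_{D'}(e) counts triples (a,b,d) with a > 0, d > 0, 0 ≤ b < a, ad = (D' - e²)/8, gcd(a,b,d,e) = 1. Then ∑_{0 < e < √D, e odd} (-1)^((e-1)/2) · e · σ₁((D - e²)/8) = ∑_{r | f} (-1)^((r-1)/2) · r · S_{D/r²}. -/

import Mathlib

/-!
Both sides count triples `(a, b, d)` with `0 ≤ b < a` and `a d = (D - e²)/8`: there are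
`σ₁((D - e²)/8)` of them, and dividing such a triple by `r = gcd(a, b, d, e)` gives a triple
counted by `m_{D/r²}(e/r)`. Because `D₀` is squarefree (a square factor `g²` of the odd `D₀`
would leave `D₀/g² ≡ 1 (mod 8)`), the `r` that occur are exactly the common divisors of `e` and
`f`. Swapping the two sums and writing `e = r e'` gives the right-hand side, the sign
`(-1)^((e-1)/2) = χ₄(e)` being multiplicative.
-/

/-- `mD D' e` is the number of integer triples `(a,b,d)` with `a > 0`, `d > 0`,
`0 ≤ b < a`, `ad = (D' - e²)/8` and `gcd(a,b,d,e) = 1`. -/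
noncomputable def mD (D' : ℕ) (e : ℕ) : ℕ :=
  {p : ℤ × ℤ × ℤ | 0 < p.1 ∧ 0 < p.2.2 ∧ 0 ≤ p.2.1 ∧ p.2.1 < p.1 ∧
    p.1 * p.2.2 = ((D' : ℤ) - (e : ℤ) ^ 2) / 8 ∧
    Int.gcd p.1 (Int.gcd p.2.1 (Int.gcd p.2.2 (e : ℤ))) = 1}.ncard

/-- `SD D' = ∑_{0 < e < √D', e odd} (-1)^((e-1)/2) · e · m_{D'}(e)`. -/
noncomputable def SD (D' : ℕ) : ℤ :=
  ∑ e ∈ (Finset.range D').filter (fun e => Odd e ∧ e ^ 2 < D'),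
    (-1 : ℤ) ^ ((e - 1) / 2) * (e : ℤ) * (mD D' e : ℤ)

open Finset

lemma Nat.sq_mod_eight_of_odd {n : ℕ} (hn : Odd n) : n ^ 2 % 8 = 1 := by
  obtain ⟨m, rfl⟩ := hn
  obtain ⟨k, hk⟩ := Nat.even_mul_succ_self m
  have : (2 * m + 1) ^ 2 = 4 * (m * (m + 1)) + 1 := by ring
  omega

lemma Nat.mod_eight_eq_one_of_sq_mul {a b : ℕ} (h : a ^ 2 * b % 8 = 1) : b % 8 = 1 := by
  have ha : Odd a := by
    by_contra hodd
    obtain ⟨k, rfl⟩ := Nat.not_odd_iff_even.1 hodd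
    have : (k + k) ^ 2 * b = 2 * (2 * k ^ 2 * b) := by ring
    omega
  rwa [Nat.mul_mod, Nat.sq_mod_eight_of_odd ha, one_mul, Nat.mod_mod] at h

lemma neg_one_pow_mul_sub_one_div_two {r e : ℕ} (hr : Odd r) (he : Odd e) :
    (-1 : ℤ) ^ ((r * e - 1) / 2) = (-1) ^ ((r - 1) / 2) * (-1) ^ ((e - 1) / 2) := by
  have hχ₄ : ∀ n : ℕ, Odd n → (-1 : ℤ) ^ ((n - 1) / 2) = ZMod.χ₄ n := fun n hn => by
    rw [ZMod.χ₄_eq_neg_one_pow (Nat.odd_iff.1 hn)]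
    congr 1
    have := Nat.odd_iff.1 hn
    omega
  rw [hχ₄ _ (hr.mul he), hχ₄ _ hr, hχ₄ _ he, Nat.cast_mul, map_mul]

lemma Squarefree.dvd_of_sq_dvd_sq_mul {m r f : ℕ} (hm : Squarefree m) (h : r ^ 2 ∣ f ^ 2 * m) :
    r ∣ f := by
  rcases eq_or_ne f 0 with rfl | hf
  · exact dvd_zero r
  have hr : r ≠ 0 := by
    rintro rfl
    simp [hf, hm.ne_zero] at h
  rw [← Nat.factorization_le_iff_dvd hr hf]
  intro p
  have hp := (Nat.factorization_le_iff_dvd (by positivity) (by simp [hf, hm.ne_zero])).2 h p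
  simp only [Nat.factorization_mul (pow_ne_zero 2 hf) hm.ne_zero, Nat.factorization_pow,
    Finsupp.add_apply, Finsupp.smul_apply, smul_eq_mul] at hp
  have := hm.natFactorization_le_one p
  omega

lemma squarefree_of_not_exists_sq_mul {D₀ : ℕ} (hD₀ : D₀ % 8 = 1)
    (hprim : ¬ ∃ g D' : ℕ, 1 < g ∧ D₀ = g ^ 2 * D' ∧
      (D' % 8 = 0 ∨ D' % 8 = 1 ∨ D' % 8 = 4)) :
    Squarefree D₀ := by
  rintro g ⟨D', hD'⟩
  rw [Nat.isUnit_iff]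
  by_contra hg
  have hg0 : g ≠ 0 := by rintro rfl; simp at hD'; omega
  rw [← sq] at hD'
  have hD'8 : D' % 8 = 1 := Nat.mod_eight_eq_one_of_sq_mul (hD' ▸ hD₀)
  exact hprim ⟨g, D', by omega, hD', Or.inr (Or.inl hD'8)⟩

/-- `(a, b, d)` stands for the Hermite normal form `!![a, b; 0, d]` of determinant `N`. -/
noncomputable def hermiteTriples (N : ℤ) : Finset (ℤ × ℤ × ℤ) :=
  {p ∈ Icc 1 N ×ˢ Icc 0 N ×ˢ Icc 1 N | p.2.1 < p.1 ∧ p.1 * p.2.2 = N}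

lemma mem_hermiteTriples {N : ℤ} {p : ℤ × ℤ × ℤ} :
    p ∈ hermiteTriples N ↔
      0 < p.1 ∧ 0 < p.2.2 ∧ 0 ≤ p.2.1 ∧ p.2.1 < p.1 ∧ p.1 * p.2.2 = N := by
  obtain ⟨a, b, d⟩ := p
  simp only [hermiteTriples, mem_filter, mem_product, mem_Icc]
  constructor
  · rintro ⟨⟨⟨ha, -⟩, ⟨hb, -⟩, hd, -⟩, hba, rfl⟩
    exact ⟨ha, hd, hb, hba, rfl⟩
  · rintro ⟨ha, hd, hb, hba, rfl⟩
    refine ⟨⟨⟨ha, ?_⟩, ⟨hb, ?_⟩, hd, ?_⟩, hba, rfl⟩ <;> nlinarith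

lemma smul_mem_hermiteTriples_iff {g : ℤ} (hg : 0 < g) {M : ℤ} {q : ℤ × ℤ × ℤ} :
    g • q ∈ hermiteTriples (g ^ 2 * M) ↔ q ∈ hermiteTriples M := by
  simp only [mem_hermiteTriples, Prod.smul_fst, Prod.smul_snd, smul_eq_mul,
    mul_pos_iff_of_pos_left hg, mul_nonneg_iff_of_pos_left hg, mul_lt_mul_iff_right₀ hg,
    show g * q.1 * (g * q.2.2) = g ^ 2 * (q.1 * q.2.2) by ring,
    mul_right_inj' (pow_ne_zero 2 hg.ne')]

lemma card_hermiteTriples (n : ℕ) : #(hermiteTriples n) = ArithmeticFunction.sigma 1 n := by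
  have hsigma : ArithmeticFunction.sigma 1 n = #(n.divisors.sigma range) := by
    simp [ArithmeticFunction.sigma_one_apply, card_sigma]
  rw [hsigma]
  refine card_nbij' (fun p => ⟨p.1.toNat, p.2.1.toNat⟩) (fun q => (q.1, q.2, (n / q.1 : ℕ)))
    ?_ ?_ ?_ ?_
  · rintro ⟨a, b, d⟩ h
    simp only [mem_coe, mem_hermiteTriples, mem_sigma, Nat.mem_divisors, mem_range] at h ⊢
    obtain ⟨ha, hd, hb, hba, had⟩ := h
    lift a to ℕ using ha.le
    lift d to ℕ using hd.le
    refine ⟨⟨⟨d, by exact_mod_cast had.symm⟩, ?_⟩, by omega⟩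
    rintro rfl
    simp at had
    omega
  · rintro ⟨a, b⟩ h
    simp only [mem_coe, mem_hermiteTriples, mem_sigma, Nat.mem_divisors, mem_range] at h ⊢
    obtain ⟨⟨⟨d, rfl⟩, hn⟩, hb⟩ := h
    have ha : 0 < a := by omega
    have hd : 0 < d := Nat.pos_of_ne_zero (by rintro rfl; simp at hn)
    refine ⟨by exact_mod_cast ha, ?_, by positivity, by exact_mod_cast hb, ?_⟩ <;>
      simp [Nat.mul_div_cancel_left d ha, hd]
  · rintro ⟨a, b, d⟩ h
    simp only [mem_coe, mem_hermiteTriples] at h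
    obtain ⟨ha, hd, hb, -, had⟩ := h
    lift a to ℕ using ha.le
    lift d to ℕ using hd.le
    obtain rfl : n = a * d := by exact_mod_cast had.symm
    simp [hb, Nat.mul_div_cancel_left d (by exact_mod_cast ha : 0 < a)]
  · rintro ⟨a, b⟩ -
    simp

def gcd4 (p : ℤ × ℤ × ℤ) (e : ℤ) : ℕ :=
  Int.gcd p.1 (Int.gcd p.2.1 (Int.gcd p.2.2 e))

lemma gcd4_dvd (p : ℤ × ℤ × ℤ) (e : ℤ) :
    (gcd4 p e : ℤ) ∣ p.1 ∧ (gcd4 p e : ℤ) ∣ p.2.1 ∧ (gcd4 p e : ℤ) ∣ p.2.2 ∧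
      (gcd4 p e : ℤ) ∣ e :=
  have h₁ := Int.gcd_dvd_right p.1 (Int.gcd p.2.1 (Int.gcd p.2.2 e))
  have h₂ := h₁.trans (Int.gcd_dvd_right p.2.1 (Int.gcd p.2.2 e))
  ⟨Int.gcd_dvd_left _ _, h₁.trans (Int.gcd_dvd_left _ _), h₂.trans (Int.gcd_dvd_left _ _),
    h₂.trans (Int.gcd_dvd_right _ _)⟩

lemma gcd4_smul (g : ℕ) (p : ℤ × ℤ × ℤ) (e : ℤ) :
    gcd4 ((g : ℤ) • p) (g * e) = g * gcd4 p e := by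
  simp [gcd4, Int.gcd_mul_left]

lemma mD_eq_card (D' e : ℕ) :
    mD D' e = #{p ∈ hermiteTriples (((D' : ℤ) - (e : ℤ) ^ 2) / 8) | gcd4 p e = 1} := by
  rw [mD, ← Set.ncard_coe_finset]
  congr 1
  ext p
  rw [Set.mem_ofPred_eq, mem_coe, mem_filter, mem_hermiteTriples]
  simp only [gcd4, and_assoc]

lemma card_filter_gcd4_eq (N : ℤ) {e g : ℕ} (hge : g ∣ e) (hg : 0 < g)
    (hN : (g : ℤ) ^ 2 ∣ N) :
    #{p ∈ hermiteTriples N | gcd4 p e = g} =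
      #{p ∈ hermiteTriples (N / g ^ 2) | gcd4 p ↑(e / g) = 1} := by
  obtain ⟨e', rfl⟩ := hge
  obtain ⟨M, rfl⟩ := hN
  have hgZ : (0 : ℤ) < g := by exact_mod_cast hg
  rw [Int.mul_ediv_cancel_left _ (by positivity), Nat.mul_div_cancel_left _ hg]
  symm
  rw [← card_image_of_injective _ (smul_right_injective (ℤ × ℤ × ℤ) hgZ.ne')]
  congr 1
  ext p
  simp only [mem_filter, mem_image]
  constructor
  · rintro ⟨q, ⟨hq, hq1⟩, rfl⟩
    rw [smul_mem_hermiteTriples_iff hgZ, Nat.cast_mul, gcd4_smul, hq1, mul_one]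
    exact ⟨hq, rfl⟩
  · rintro ⟨hp, hgcd⟩
    obtain ⟨⟨a, ha⟩, ⟨b, hb⟩, ⟨d, hd⟩, -⟩ := gcd4_dvd p (g * e' : ℕ)
    rw [hgcd] at ha hb hd
    obtain rfl : p = (g : ℤ) • (a, b, d) := Prod.ext ha (Prod.ext hb hd)
    rw [Nat.cast_mul, gcd4_smul] at hgcd
    exact ⟨(a, b, d),
      ⟨(smul_mem_hermiteTriples_iff hgZ).1 hp, (Nat.mul_eq_left hg.ne').1 hgcd⟩, rfl⟩

lemma card_hermiteTriples_eq_sum (N : ℤ) {e : ℕ} (he : e ≠ 0) :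
    #(hermiteTriples N) = ∑ g ∈ e.divisors.filter (fun g : ℕ => (g : ℤ) ^ 2 ∣ N),
      #{p ∈ hermiteTriples (N / g ^ 2) | gcd4 p ↑(e / g) = 1} := by
  have hmaps : Set.MapsTo (fun p => gcd4 p e) (hermiteTriples N) e.divisors := fun p _ =>
    Nat.mem_divisors.2 ⟨Int.natCast_dvd_natCast.1 (gcd4_dvd p e).2.2.2, he⟩
  rw [card_eq_sum_card_fiberwise hmaps,
    ← sum_filter_of_ne (p := fun g : ℕ => (g : ℤ) ^ 2 ∣ N)]
  · refine sum_congr rfl fun g hg => ?_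
    obtain ⟨⟨hge, -⟩, hN⟩ := by simpa only [mem_filter, Nat.mem_divisors] using hg
    exact card_filter_gcd4_eq N hge (Nat.pos_of_dvd_of_pos hge he.bot_lt) hN
  · intro g _ hne
    obtain ⟨p, hp⟩ := card_ne_zero.1 hne
    rw [mem_filter, mem_hermiteTriples] at hp
    obtain ⟨⟨-, -, -, -, hN⟩, rfl⟩ := hp
    obtain ⟨ha, -, hd, -⟩ := gcd4_dvd p e
    rw [sq, ← hN]
    exact mul_dvd_mul ha hd

lemma sub_sq_div_eight_div_sq {D e g : ℕ} (hD : g ^ 2 ∣ D) (he : g ∣ e) (hg : 0 < g) :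
    ((D : ℤ) - (e : ℤ) ^ 2) / 8 / (g : ℤ) ^ 2 =
      (((D / g ^ 2 : ℕ) : ℤ) - ((e / g : ℕ) : ℤ) ^ 2) / 8 := by
  obtain ⟨D', rfl⟩ := hD
  obtain ⟨e', rfl⟩ := he
  rw [Nat.mul_div_cancel_left _ (by positivity), Nat.mul_div_cancel_left _ hg,
    Int.ediv_ediv_of_nonneg (by norm_num), mul_comm (8 : ℤ)]
  push_cast
  rw [show (g : ℤ) ^ 2 * D' - (g * e') ^ 2 = g ^ 2 * (D' - e' ^ 2) by ring,
    Int.mul_ediv_mul_of_pos _ _ (by positivity)]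

section

variable {D f D₀ e : ℕ}

lemma sq_dvd_iff_dvd_of_sub_sq {n g : ℕ} (hfD : D = f ^ 2 * D₀) (hD₀ : Squarefree D₀)
    (h8 : 8 * n = D - e ^ 2) (he : Odd e) (he2 : e ^ 2 ≤ D) (hge : g ∣ e) :
    g ^ 2 ∣ n ↔ g ∣ f := by
  have hcop : Nat.Coprime (g ^ 2) (2 ^ 3) :=
    Nat.Coprime.pow 2 3 (Nat.coprime_two_right.2 (he.of_dvd_nat hge))
  calc g ^ 2 ∣ n ↔ g ^ 2 ∣ 8 * n := hcop.dvd_mul_left.symm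
    _ ↔ g ^ 2 ∣ D - e ^ 2 + e ^ 2 := by rw [h8, Nat.dvd_add_left (pow_dvd_pow_of_dvd hge 2)]
    _ ↔ g ^ 2 ∣ D := by rw [Nat.sub_add_cancel he2]
    _ ↔ g ∣ f := ⟨fun h => hD₀.dvd_of_sq_dvd_sq_mul (hfD ▸ h),
        fun h => hfD ▸ (pow_dvd_pow_of_dvd h 2).mul_right _⟩

lemma sigma_sub_sq_div_eight_eq_sum_mD (hfD : D = f ^ 2 * D₀) (hD₀ : Squarefree D₀)
    (hmod : D % 8 = 1) (he : Odd e) (he2 : e ^ 2 < D) :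
    ArithmeticFunction.sigma 1 ((D - e ^ 2) / 8) =
      ∑ r ∈ f.divisors.filter (· ∣ e), mD (D / r ^ 2) (e / r) := by
  have hf : f ≠ 0 := by rintro rfl; simp at hfD; omega
  set n := (D - e ^ 2) / 8 with hn
  have h8 : 8 * n = D - e ^ 2 := by have := Nat.sq_mod_eight_of_odd he; omega
  have hnZ : (n : ℤ) = ((D : ℤ) - (e : ℤ) ^ 2) / 8 := by
    rw [hn, Int.natCast_div, Nat.cast_sub he2.le]
    push_cast
    rfl
  have hsq_dvd : ∀ g, g ∣ e → ((g : ℤ) ^ 2 ∣ n ↔ g ∣ f) := fun g hge => by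
    exact_mod_cast sq_dvd_iff_dvd_of_sub_sq hfD hD₀ h8 he he2.le hge
  have hdivisors :
      e.divisors.filter (fun g : ℕ => (g : ℤ) ^ 2 ∣ n) = f.divisors.filter (· ∣ e) := by
    ext g
    simp only [mem_filter, Nat.mem_divisors]
    exact ⟨fun ⟨⟨hge, _⟩, hgn⟩ => ⟨⟨(hsq_dvd g hge).1 hgn, hf⟩, hge⟩,
      fun ⟨⟨hgf, _⟩, hge⟩ => ⟨⟨hge, he.pos.ne'⟩, (hsq_dvd g hge).2 hgf⟩⟩
  rw [← card_hermiteTriples, card_hermiteTriples_eq_sum _ he.pos.ne', hdivisors]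
  refine sum_congr rfl fun r hr => ?_
  obtain ⟨⟨hrf, -⟩, hre⟩ := by simpa only [mem_filter, Nat.mem_divisors] using hr
  rw [mD_eq_card, ← sub_sq_div_eight_div_sq (hfD ▸ (pow_dvd_pow_of_dvd hrf 2).mul_right _) hre
    (Nat.pos_of_dvd_of_pos hre he.pos), hnZ]

end

def oddBelowSqrt (D : ℕ) : Finset ℕ :=
  (range D).filter (fun e => Odd e ∧ e ^ 2 < D)

lemma mem_oddBelowSqrt {D e : ℕ} : e ∈ oddBelowSqrt D ↔ Odd e ∧ e ^ 2 < D := by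
  rw [oddBelowSqrt, mem_filter, mem_range, and_iff_right_of_imp]
  exact fun ⟨_, he⟩ => (Nat.le_self_pow two_ne_zero e).trans_lt he

lemma oddBelowSqrt_filter_dvd {D r : ℕ} (hr : Odd r) (hrD : r ^ 2 ∣ D) :
    (oddBelowSqrt D).filter (r ∣ ·) = (oddBelowSqrt (D / r ^ 2)).image (r * ·) := by
  obtain ⟨D', rfl⟩ := hrD
  have hr2 : 0 < r ^ 2 := pow_pos hr.pos 2
  ext e
  simp only [mem_filter, mem_image, mem_oddBelowSqrt, Nat.mul_div_cancel_left _ hr2]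
  constructor
  · rintro ⟨⟨he, he2⟩, e', rfl⟩
    exact ⟨e', ⟨(Nat.odd_mul.1 he).2, Nat.lt_of_mul_lt_mul_left (by rwa [← mul_pow])⟩, rfl⟩
  · rintro ⟨e', ⟨he', he'2⟩, rfl⟩
    refine ⟨⟨hr.mul he', ?_⟩, dvd_mul_right r e'⟩
    rw [mul_pow]
    exact Nat.mul_lt_mul_of_pos_left he'2 hr2

lemma sum_oddBelowSqrt_dvd_eq_SD {D r : ℕ} (hr : Odd r) (hrD : r ^ 2 ∣ D) :
    ∑ e ∈ (oddBelowSqrt D).filter (r ∣ ·),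
        (-1 : ℤ) ^ ((e - 1) / 2) * e * mD (D / r ^ 2) (e / r) =
      (-1 : ℤ) ^ ((r - 1) / 2) * r * SD (D / r ^ 2) := by
  rw [oddBelowSqrt_filter_dvd hr hrD,
    sum_image fun _ _ _ _ h => Nat.eq_of_mul_eq_mul_left hr.pos h, SD, mul_sum]
  refine sum_congr rfl fun e he => ?_
  rw [Nat.mul_div_cancel_left _ hr.pos, neg_one_pow_mul_sub_one_div_two hr (mem_oddBelowSqrt.1 he).1]
  push_cast
  ring

theorem sigma_sum_eq_sum_SD_general (D f D₀ : ℕ)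
    (hmod : D % 8 = 1) (hfD : D = f ^ 2 * D₀)
    (hprim : ¬ ∃ g D' : ℕ, 1 < g ∧ D₀ = g ^ 2 * D' ∧
      (D' % 8 = 0 ∨ D' % 8 = 1 ∨ D' % 8 = 4)) :
    ∑ e ∈ (Finset.range D).filter (fun e => Odd e ∧ e ^ 2 < D),
        (-1 : ℤ) ^ ((e - 1) / 2) * (e : ℤ) * (ArithmeticFunction.sigma 1 ((D - e ^ 2) / 8) : ℤ)
      = ∑ r ∈ f.divisors, (-1 : ℤ) ^ ((r - 1) / 2) * (r : ℤ) * SD (D / r ^ 2) := by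
  have hD₀ : Squarefree D₀ :=
    squarefree_of_not_exists_sq_mul (Nat.mod_eight_eq_one_of_sq_mul (hfD ▸ hmod)) hprim
  have hD : Odd D := Nat.odd_iff.2 (by omega)
  change ∑ e ∈ oddBelowSqrt D, _ = _
  calc _ = ∑ e ∈ oddBelowSqrt D, ∑ r ∈ f.divisors.filter (· ∣ e),
        (-1 : ℤ) ^ ((e - 1) / 2) * e * mD (D / r ^ 2) (e / r) := by
        refine sum_congr rfl fun e he => ?_
        rw [mem_oddBelowSqrt] at he
        rw [sigma_sub_sq_div_eight_eq_sum_mD hfD hD₀ hmod he.1 he.2, Nat.cast_sum, mul_sum]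
    _ = ∑ r ∈ f.divisors, ∑ e ∈ (oddBelowSqrt D).filter (r ∣ ·),
        (-1 : ℤ) ^ ((e - 1) / 2) * e * mD (D / r ^ 2) (e / r) :=
        sum_comm' fun e r => by simp only [mem_filter]; tauto
    _ = _ := by
        refine sum_congr rfl fun r hr => ?_
        have hrD : r ^ 2 ∣ D :=
          hfD ▸ (pow_dvd_pow_of_dvd (Nat.dvd_of_mem_divisors hr) 2).mul_right _
        exact sum_oddBelowSqrt_dvd_eq_SD
          (hD.of_dvd_nat ((dvd_pow_self r two_ne_zero).trans hrD)) hrD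

/-- For a positive non-square `D ≡ 1 (mod 8)` with `D = f²·D₀`, `D₀` `(1,2)`-primitive,
`∑_{0 < e < √D, e odd} (-1)^((e-1)/2)·e·σ₁((D-e²)/8) = ∑_{r ∣ f} (-1)^((r-1)/2)·r·S_{D/r²}`. -/
theorem sigma_sum_eq_sum_SD (D f D₀ : ℕ) (hD : 0 < D) (hsq : ¬ IsSquare D)
    (hmod : D % 8 = 1) (hfD : D = f ^ 2 * D₀)
    (hD₀mod : D₀ % 8 = 0 ∨ D₀ % 8 = 1 ∨ D₀ % 8 = 4)
    (hprim : ¬ ∃ g D' : ℕ, 1 < g ∧ D₀ = g ^ 2 * D' ∧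
      (D' % 8 = 0 ∨ D' % 8 = 1 ∨ D' % 8 = 4)) :
    ∑ e ∈ (Finset.range D).filter (fun e => Odd e ∧ e ^ 2 < D),
        (-1 : ℤ) ^ ((e - 1) / 2) * (e : ℤ) * (ArithmeticFunction.sigma 1 ((D - e ^ 2) / 8) : ℤ)
      = ∑ r ∈ f.divisors, (-1 : ℤ) ^ ((r - 1) / 2) * (r : ℤ) * SD (D / r ^ 2) :=
  sigma_sum_eq_sum_SD_general D f D₀ hmod hfD hprim
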